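/- The Gibbs measure is a stationary solution of the Fokker–Planck equation for Langevin dynamics, in weak form: for every smooth compactly supported function f : ℝ^ν × ℝ^ν → ℝ, ∫ [ (M⁻¹p)·∇_q f(q,p) − ∇U(q)·∇_p f(q,p) − γ (M⁻¹p)·∇_p f(q,p) + γ β⁻¹ Δ_p f(q,p) ] μ(dq, dp) = 0, where ∇_q, ∇_p denote gradients in the position and momentum variables and Δ_p the Laplacian in the momentum variables. -/

import Mathlib

open MeasureTheory Matrix
open scoped NNReal ENNReal

/-- The gradient of `U : ℝ^ν → ℝ` in the standard basis. -/
noncomputable def grad {ν : ℕ} (U : (Fin ν → ℝ) → ℝ) (q : Fin ν → ℝ) : Fin ν → ℝ :=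
  fun i => fderiv ℝ U q (Pi.single i 1)

/-- The gradient of a phase-space function in the position variables. -/
noncomputable def gradQ {ν : ℕ} (f : (Fin ν → ℝ) × (Fin ν → ℝ) → ℝ)
    (x : (Fin ν → ℝ) × (Fin ν → ℝ)) : Fin ν → ℝ :=
  fun i => fderiv ℝ f x (Pi.single i 1, 0)

/-- The gradient of a phase-space function in the momentum variables. -/
noncomputable def gradP {ν : ℕ} (f : (Fin ν → ℝ) × (Fin ν → ℝ) → ℝ)
    (x : (Fin ν → ℝ) × (Fin ν → ℝ)) : Fin ν → ℝ :=
  fun i => fderiv ℝ f x (0, Pi.single i 1)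

/-- The Laplacian of a phase-space function in the momentum variables. -/
noncomputable def lapP {ν : ℕ} (f : (Fin ν → ℝ) × (Fin ν → ℝ) → ℝ)
    (x : (Fin ν → ℝ) × (Fin ν → ℝ)) : ℝ :=
  ∑ i, fderiv ℝ (fun y => fderiv ℝ f y (0, Pi.single i 1)) x (0, Pi.single i 1)

/-- The Hamiltonian `H(q,p) = ½ pᵀM⁻¹p + U(q)`. -/
noncomputable def hamiltonian {ν : ℕ} (M : Matrix (Fin ν) (Fin ν) ℝ)
    (U : (Fin ν → ℝ) → ℝ) (x : (Fin ν → ℝ) × (Fin ν → ℝ)) : ℝ :=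
  (1 / 2) * (x.2 ⬝ᵥ (M⁻¹).mulVec x.2) + U x.1

/-- The Gibbs probability measure with density `Z⁻¹ e^{-βH}` with respect to
Lebesgue measure on phase space. -/
noncomputable def gibbs {ν : ℕ} (β : ℝ)
    (H : (Fin ν → ℝ) × (Fin ν → ℝ) → ℝ) :
    Measure ((Fin ν → ℝ) × (Fin ν → ℝ)) :=
  volume.withDensity fun x =>
    ENNReal.ofReal ((∫ y, Real.exp (-β * H y))⁻¹ * Real.exp (-β * H x))

section Aux

/-- Phase space. -/
abbrev GibbsAux.Phase (ν : ℕ) := (Fin ν → ℝ) × (Fin ν → ℝ)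

namespace GibbsAux

instance (ν : ℕ) : (volume : Measure (Phase ν)).IsAddHaarMeasure := by
  rw [MeasureTheory.Measure.volume_eq_prod]; exact Measure.prod.instIsAddHaarMeasure _ _

lemma hldAt_congr_deriv {ν : ℕ} {f : Phase ν → ℝ} {a b : ℝ} {x v : Phase ν}
    (h : HasLineDerivAt ℝ f a x v) (hab : a = b) : HasLineDerivAt ℝ f b x v := hab ▸ h

lemma hldAt_mul {ν : ℕ} {f g : Phase ν → ℝ} {a b : ℝ} {x v : Phase ν}
    (hf : HasLineDerivAt ℝ f a x v) (hg : HasLineDerivAt ℝ g b x v) :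
    HasLineDerivAt ℝ (fun y => f y * g y) (a * g x + f x * b) x v := by
  have h := HasDerivAt.fun_mul (c := fun t : ℝ => f (x + t • v)) (d := fun t : ℝ => g (x + t • v))
    (x := (0:ℝ)) hf hg
  simpa [HasLineDerivAt] using h

/-- Line derivative of the weight `exp (-β H)`. -/
lemma hldAt_weight {ν : ℕ} {H : Phase ν → ℝ} {β c : ℝ} {x v : Phase ν}
    (h : HasLineDerivAt ℝ H c x v) :
    HasLineDerivAt ℝ (fun y => Real.exp (-β * H y)) (Real.exp (-β * H x) * (-β * c)) x v := by
  have h' : HasDerivAt (fun t : ℝ => -β * H (x + t • v)) (-β * c) 0 := HasDerivAt.const_mul _ h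
  have := h'.exp
  simpa [HasLineDerivAt] using this

lemma hldAt_of_q {ν : ℕ} (φ : (Fin ν → ℝ) → ℝ) (x : Phase ν) (u : Fin ν → ℝ) :
    HasLineDerivAt ℝ (fun y : Phase ν => φ y.2) 0 x (u, 0) := by
  have : (fun t : ℝ => φ ((x + t • (u, (0 : Fin ν → ℝ))).2)) = fun _ => φ x.2 := by
    funext t; simp [Prod.smul_def]
  simpa [HasLineDerivAt, this] using hasDerivAt_const (0:ℝ) (φ x.2)

lemma hldAt_of_p {ν : ℕ} (φ : (Fin ν → ℝ) → ℝ) (x : Phase ν) (u : Fin ν → ℝ) :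
    HasLineDerivAt ℝ (fun y : Phase ν => φ y.1) 0 x (0, u) := by
  have : (fun t : ℝ => φ ((x + t • ((0 : Fin ν → ℝ), u)).1)) = fun _ => φ x.1 := by
    funext t; simp [Prod.smul_def]
  simpa [HasLineDerivAt, this] using hasDerivAt_const (0:ℝ) (φ x.1)

lemma hldAt_mulVec {ν : ℕ} (A : Matrix (Fin ν) (Fin ν) ℝ) (i : Fin ν) (x v : Phase ν) :
    HasLineDerivAt ℝ (fun y : Phase ν => A.mulVec y.2 i) (A.mulVec v.2 i) x v := by
  have : (fun t : ℝ => A.mulVec ((x + t • v).2) i)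
      = fun t : ℝ => A.mulVec x.2 i + t * A.mulVec v.2 i := by
    funext t
    simp [Prod.smul_def, Matrix.mulVec_add, Matrix.mulVec_smul, smul_eq_mul]
  rw [HasLineDerivAt, this]
  simpa using (((hasDerivAt_id (0:ℝ)).mul_const (A.mulVec v.2 i)).const_add (A.mulVec x.2 i))

lemma hldAt_hamiltonian_q {ν : ℕ} {M : Matrix (Fin ν) (Fin ν) ℝ} {U : (Fin ν → ℝ) → ℝ}
    (hU : ContDiff ℝ 1 U) (x : Phase ν) (i : Fin ν) :
    HasLineDerivAt ℝ (hamiltonian M U) (grad U x.1 i) x ((Pi.single i 1 : Fin ν → ℝ), 0) := by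
  have hU' : HasLineDerivAt ℝ U (grad U x.1 i) x.1 (Pi.single i 1) :=
    ((hU.differentiable one_ne_zero x.1).hasFDerivAt).hasLineDerivAt _
  have h : (fun t : ℝ => hamiltonian M U (x + t • ((Pi.single i 1 : Fin ν → ℝ), 0)))
      = fun t : ℝ => U (x.1 + t • (Pi.single i 1 : Fin ν → ℝ))
          + (1 / 2) * (x.2 ⬝ᵥ (M⁻¹).mulVec x.2) := by
    funext t
    simp [hamiltonian, Prod.smul_def]
    ring
  rw [HasLineDerivAt, h]
  exact (hU'.add_const _)

lemma hldAt_hamiltonian_p {ν : ℕ} {M : Matrix (Fin ν) (Fin ν) ℝ} {U : (Fin ν → ℝ) → ℝ}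
    (hsymm : (M⁻¹)ᵀ = M⁻¹) (x : Phase ν) (i : Fin ν) :
    HasLineDerivAt ℝ (hamiltonian M U) ((M⁻¹).mulVec x.2 i) x (0, (Pi.single i 1 : Fin ν → ℝ)) := by
  set A := M⁻¹ with hA
  set e : Fin ν → ℝ := Pi.single i 1 with he
  have h : (fun t : ℝ => hamiltonian M U (x + t • ((0 : Fin ν → ℝ), e)))
      = fun t : ℝ => ((1/2) * (x.2 ⬝ᵥ A.mulVec x.2) + U x.1)
          + t * ((1/2) * (e ⬝ᵥ A.mulVec x.2 + x.2 ⬝ᵥ A.mulVec e))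
          + t ^ 2 * ((1/2) * (e ⬝ᵥ A.mulVec e)) := by
    funext t
    simp only [hamiltonian, Prod.smul_def, Prod.fst_add, Prod.snd_add, Prod.mk_add_mk,
      smul_zero, add_zero, Prod.smul_mk, ← hA]
    simp only [Matrix.mulVec_add, Matrix.mulVec_smul, add_dotProduct,
      dotProduct_add, smul_dotProduct, dotProduct_smul, smul_eq_mul]
    ring
  have hd : HasDerivAt (fun t : ℝ => ((1/2) * (x.2 ⬝ᵥ A.mulVec x.2) + U x.1)
          + t * ((1/2) * (e ⬝ᵥ A.mulVec x.2 + x.2 ⬝ᵥ A.mulVec e))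
          + t ^ 2 * ((1/2) * (e ⬝ᵥ A.mulVec e)))
      ((1/2) * (e ⬝ᵥ A.mulVec x.2 + x.2 ⬝ᵥ A.mulVec e)) 0 := by
    have h1 := ((hasDerivAt_id (0:ℝ)).mul_const
      ((1/2) * (e ⬝ᵥ A.mulVec x.2 + x.2 ⬝ᵥ A.mulVec e))).const_add
      ((1/2) * (x.2 ⬝ᵥ A.mulVec x.2) + U x.1)
    have h2 := (hasDerivAt_pow 2 (0:ℝ)).mul_const ((1/2) * (e ⬝ᵥ A.mulVec e))
    simpa using h1.fun_add h2
  rw [HasLineDerivAt, h]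
  convert hd using 1
  · rfl
  · rfl
  have h1 : e ⬝ᵥ A.mulVec x.2 = A.mulVec x.2 i := by
    rw [he]; rw [single_dotProduct]; ring
  have h2 : x.2 ⬝ᵥ A.mulVec e = A.mulVec x.2 i := by
    rw [Matrix.dotProduct_mulVec, ← Matrix.mulVec_transpose, hsymm, he,
      dotProduct_single]
    ring
  rw [h1, h2]; ring

/-- Integration by parts on phase space. -/
lemma ibp {ν : ℕ} (φ φ' g g' : Phase ν → ℝ) (v : Phase ν)
    (hφ : ∀ x, HasLineDerivAt ℝ φ (φ' x) x v)
    (hg : ∀ x, HasLineDerivAt ℝ g (g' x) x v)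
    (hφc : Continuous φ) (hφc' : Continuous φ')
    (hgc : Continuous g) (hgc' : Continuous g')
    (hgs : HasCompactSupport g) (hgs' : HasCompactSupport g') :
    ∫ x, φ x * g' x = - ∫ x, φ' x * g x := by
  have h := integral_bilinear_hasLineDerivAt_right_eq_neg_left_of_integrable
    (μ := (volume : Measure (Phase ν))) (B := ContinuousLinearMap.mul ℝ ℝ)
    (f := φ) (g := g) (f' := φ') (g' := g') (v := v)
    ((hφc'.mul hgc).integrable_of_hasCompactSupport hgs.mul_left)
    ((hφc.mul hgc').integrable_of_hasCompactSupport hgs'.mul_left)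
    ((hφc.mul hgc).integrable_of_hasCompactSupport hgs.mul_left)
    (fun x _ => hφ x) (fun x _ => hg x)
  simpa using h

end GibbsAux

end Aux

open GibbsAux in
/-- The Gibbs measure is a stationary solution of the Fokker–Planck equation
for Langevin dynamics, in weak form. -/
theorem gibbs_stationary_fokker_planck
    (ν : ℕ) (β γ : ℝ) (hβ : 0 < β) (hγ : 0 < γ)
    (M : Matrix (Fin ν) (Fin ν) ℝ) (hM : M.PosDef)
    (U : (Fin ν → ℝ) → ℝ) (hU : ContDiff ℝ 1 U)
    (hUint : Integrable (fun q => Real.exp (-β * U q)) volume)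
    (hHint : Integrable (fun x => Real.exp (-β * hamiltonian M U x)) volume) :
    ∀ f : (Fin ν → ℝ) × (Fin ν → ℝ) → ℝ,
      ContDiff ℝ (⊤ : ℕ∞) f → HasCompactSupport f →
      ∫ x, (((M⁻¹).mulVec x.2) ⬝ᵥ gradQ f x
            - grad U x.1 ⬝ᵥ gradP f x
            - γ * (((M⁻¹).mulVec x.2) ⬝ᵥ gradP f x)
            + γ * β⁻¹ * lapP f x)
        ∂(gibbs β (hamiltonian M U)) = 0 := by
  intro f hf hsupp
  set A := M⁻¹ with hA
  -- symmetry of A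
  have hMsymm : Mᵀ = M := by
    have := hM.isHermitian
    simpa [Matrix.IsHermitian, Matrix.conjTranspose_eq_transpose_of_trivial] using this
  have hAsymm : Aᵀ = A := by
    rw [hA, Matrix.transpose_nonsing_inv, hMsymm]
  -- the unnormalized weight
  set w : Phase ν → ℝ := fun x => Real.exp (-β * hamiltonian M U x) with hw
  -- directions
  set vq : Fin ν → Phase ν := fun i => ((Pi.single i 1 : Fin ν → ℝ), 0) with hvq
  set vp : Fin ν → Phase ν := fun i => (0, (Pi.single i 1 : Fin ν → ℝ)) with hvp
  -- continuity facts
  have hHcont : Continuous (hamiltonian M U) := by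
    unfold hamiltonian
    refine (continuous_const.mul ?_).add (hU.continuous.comp continuous_fst)
    unfold dotProduct Matrix.mulVec
    refine continuous_finset_sum _ fun j _ => ?_
    exact ((continuous_apply j).comp continuous_snd).mul
      (continuous_finset_sum _ fun k _ =>
        continuous_const.mul ((continuous_apply k).comp continuous_snd))
  have hwc : Continuous w := (continuous_const.mul hHcont).rexp
  have hAc : ∀ i, Continuous fun x : Phase ν => A.mulVec x.2 i := by
    intro i
    unfold Matrix.mulVec dotProduct
    exact continuous_finset_sum _ fun k _ =>
      continuous_const.mul ((continuous_apply k).comp continuous_snd)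
  have hgradUc : ∀ i, Continuous fun x : Phase ν => grad U x.1 i := by
    intro i
    have : Continuous (fderiv ℝ U) := hU.continuous_fderiv one_ne_zero
    exact ((this.clm_apply continuous_const).comp continuous_fst)
  -- smoothness of derivatives of f
  have hdf_cd : ∀ v : Phase ν, ContDiff ℝ (⊤ : ℕ∞) fun x => fderiv ℝ f x v := fun v =>
    (hf.fderiv_right (by simp)).clm_apply contDiff_const
  have hdfc : ∀ v : Phase ν, Continuous fun x => fderiv ℝ f x v := fun v =>
    (hdf_cd v).continuous
  have hdfs : ∀ v : Phase ν, HasCompactSupport fun x => fderiv ℝ f x v := fun v =>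
    hsupp.fderiv_apply ℝ v
  have hfd : Differentiable ℝ f := hf.differentiable (by simp)
  have hgd : ∀ v : Phase ν, Differentiable ℝ fun x => fderiv ℝ f x v := fun v =>
    (hdf_cd v).differentiable (by simp)
  have hd2f_cd : ∀ i : Fin ν,
      ContDiff ℝ (⊤ : ℕ∞) fun x => fderiv ℝ (fun y => fderiv ℝ f y (vp i)) x (vp i) := fun i =>
    ((hdf_cd (vp i)).fderiv_right (by simp)).clm_apply contDiff_const
  have hd2fc : ∀ i : Fin ν,
      Continuous fun x => fderiv ℝ (fun y => fderiv ℝ f y (vp i)) x (vp i) := fun i =>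
    (hd2f_cd i).continuous
  have hd2fs : ∀ i : Fin ν,
      HasCompactSupport fun x => fderiv ℝ (fun y => fderiv ℝ f y (vp i)) x (vp i) := fun i =>
    (hdfs (vp i)).fderiv_apply ℝ (vp i)
  -- the three integration-by-parts identities
  set J : Fin ν → ℝ := fun i => ∫ x, w x * (A.mulVec x.2 i * grad U x.1 i) * f x with hJ
  set K : Fin ν → ℝ := fun i => ∫ x, w x * (A.mulVec x.2 i * fderiv ℝ f x (vp i)) with hK
  have hL1 : ∀ i, ∫ x, w x * (A.mulVec x.2 i * fderiv ℝ f x (vq i)) = β * J i := by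
    intro i
    have hφ : ∀ x : Phase ν, HasLineDerivAt ℝ (fun y => w y * A.mulVec y.2 i)
        (-(β * (w x * (A.mulVec x.2 i * grad U x.1 i)))) x (vq i) := by
      intro x
      refine hldAt_congr_deriv
        (hldAt_mul (hldAt_weight (hldAt_hamiltonian_q hU x i)) (hldAt_mulVec A i x (vq i))) ?_
      simp only [hw, hvq, Matrix.mulVec_zero, Pi.zero_apply, mul_zero, add_zero]
      ring
    have h := ibp (fun y => w y * A.mulVec y.2 i)
      (fun x => -(β * (w x * (A.mulVec x.2 i * grad U x.1 i))))
      f (fun x => fderiv ℝ f x (vq i)) (vq i)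
      hφ (fun x => (hfd x).hasFDerivAt.hasLineDerivAt _)
      (hwc.mul (hAc i))
      ((continuous_const.mul (hwc.mul ((hAc i).mul (hgradUc i)))).neg)
      hf.continuous (hdfc (vq i)) hsupp (hdfs (vq i))
    calc ∫ x, w x * (A.mulVec x.2 i * fderiv ℝ f x (vq i))
        = ∫ x, (w x * A.mulVec x.2 i) * fderiv ℝ f x (vq i) := by
          congr 1; funext x; ring
      _ = - ∫ x, -(β * (w x * (A.mulVec x.2 i * grad U x.1 i))) * f x := h
      _ = ∫ x, β * (w x * (A.mulVec x.2 i * grad U x.1 i) * f x) := by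
          rw [← integral_neg]; congr 1; funext x; ring
      _ = β * J i := by rw [integral_const_mul, hJ]
  have hL2 : ∀ i, ∫ x, w x * (grad U x.1 i * fderiv ℝ f x (vp i)) = β * J i := by
    intro i
    have hφ : ∀ x : Phase ν, HasLineDerivAt ℝ (fun y => w y * grad U y.1 i)
        (-(β * (w x * (A.mulVec x.2 i * grad U x.1 i)))) x (vp i) := by
      intro x
      refine hldAt_congr_deriv
        (hldAt_mul (hldAt_weight (hldAt_hamiltonian_p hAsymm x i))
          (hldAt_of_p (fun q => grad U q i) x (Pi.single i 1))) ?_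
      simp only [hw, mul_zero, add_zero]
      ring
    have h := ibp (fun y => w y * grad U y.1 i)
      (fun x => -(β * (w x * (A.mulVec x.2 i * grad U x.1 i))))
      f (fun x => fderiv ℝ f x (vp i)) (vp i)
      hφ (fun x => (hfd x).hasFDerivAt.hasLineDerivAt _)
      (hwc.mul (hgradUc i))
      ((continuous_const.mul (hwc.mul ((hAc i).mul (hgradUc i)))).neg)
      hf.continuous (hdfc (vp i)) hsupp (hdfs (vp i))
    calc ∫ x, w x * (grad U x.1 i * fderiv ℝ f x (vp i))
        = ∫ x, (w x * grad U x.1 i) * fderiv ℝ f x (vp i) := by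
          congr 1; funext x; ring
      _ = - ∫ x, -(β * (w x * (A.mulVec x.2 i * grad U x.1 i))) * f x := h
      _ = ∫ x, β * (w x * (A.mulVec x.2 i * grad U x.1 i) * f x) := by
          rw [← integral_neg]; congr 1; funext x; ring
      _ = β * J i := by rw [integral_const_mul, hJ]
  have hL3 : ∀ i, ∫ x, w x * fderiv ℝ (fun y => fderiv ℝ f y (vp i)) x (vp i) = β * K i := by
    intro i
    have hφ : ∀ x : Phase ν, HasLineDerivAt ℝ w
        (-(β * (w x * A.mulVec x.2 i))) x (vp i) := by
      intro x
      refine hldAt_congr_deriv (hldAt_weight (hldAt_hamiltonian_p hAsymm x i)) ?_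
      simp only [hw]
      ring
    have h := ibp w (fun x => -(β * (w x * A.mulVec x.2 i)))
      (fun y => fderiv ℝ f y (vp i))
      (fun x => fderiv ℝ (fun y => fderiv ℝ f y (vp i)) x (vp i)) (vp i)
      hφ (fun x => (hgd (vp i) x).hasFDerivAt.hasLineDerivAt _)
      hwc ((continuous_const.mul (hwc.mul (hAc i))).neg)
      (hdfc (vp i)) (hd2fc i) (hdfs (vp i)) (hd2fs i)
    calc ∫ x, w x * fderiv ℝ (fun y => fderiv ℝ f y (vp i)) x (vp i)
        = - ∫ x, -(β * (w x * A.mulVec x.2 i)) * fderiv ℝ f x (vp i) := h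
      _ = ∫ x, β * (w x * (A.mulVec x.2 i * fderiv ℝ f x (vp i))) := by
          rw [← integral_neg]; congr 1; funext x; ring
      _ = β * K i := by rw [integral_const_mul, hK]
  -- integrability of the four pieces
  have i1 : ∀ i, Integrable (fun x : Phase ν =>
      w x * (A.mulVec x.2 i * fderiv ℝ f x (vq i))) := fun i =>
    (hwc.mul ((hAc i).mul (hdfc (vq i)))).integrable_of_hasCompactSupport
      ((hdfs (vq i)).mul_left.mul_left)
  have i2 : ∀ i, Integrable (fun x : Phase ν =>
      w x * (grad U x.1 i * fderiv ℝ f x (vp i))) := fun i =>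
    (hwc.mul ((hgradUc i).mul (hdfc (vp i)))).integrable_of_hasCompactSupport
      ((hdfs (vp i)).mul_left.mul_left)
  have i3 : ∀ i, Integrable (fun x : Phase ν =>
      w x * (A.mulVec x.2 i * fderiv ℝ f x (vp i))) := fun i =>
    (hwc.mul ((hAc i).mul (hdfc (vp i)))).integrable_of_hasCompactSupport
      ((hdfs (vp i)).mul_left.mul_left)
  have i4 : ∀ i, Integrable (fun x : Phase ν =>
      w x * fderiv ℝ (fun y => fderiv ℝ f y (vp i)) x (vp i)) := fun i =>
    (hwc.mul (hd2fc i)).integrable_of_hasCompactSupport ((hd2fs i).mul_left)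
  -- per coordinate, the integral vanishes
  have hzero : ∀ i : Fin ν, ∫ x, (w x * (A.mulVec x.2 i * fderiv ℝ f x (vq i))
      - w x * (grad U x.1 i * fderiv ℝ f x (vp i))
      - γ * (w x * (A.mulVec x.2 i * fderiv ℝ f x (vp i)))
      + γ * β⁻¹ * (w x * fderiv ℝ (fun y => fderiv ℝ f y (vp i)) x (vp i))) = 0 := by
    intro i
    have e1 : Integrable (fun x : Phase ν => w x * (A.mulVec x.2 i * fderiv ℝ f x (vq i))
        - w x * (grad U x.1 i * fderiv ℝ f x (vp i))) volume := (i1 i).sub (i2 i)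
    have e3 : Integrable (fun x : Phase ν =>
        γ * (w x * (A.mulVec x.2 i * fderiv ℝ f x (vp i)))) volume := (i3 i).const_mul γ
    have e2 : Integrable (fun x : Phase ν => w x * (A.mulVec x.2 i * fderiv ℝ f x (vq i))
        - w x * (grad U x.1 i * fderiv ℝ f x (vp i))
        - γ * (w x * (A.mulVec x.2 i * fderiv ℝ f x (vp i)))) volume := e1.sub e3
    have e4 : Integrable (fun x : Phase ν =>
        γ * β⁻¹ * (w x * fderiv ℝ (fun y => fderiv ℝ f y (vp i)) x (vp i))) volume :=
      (i4 i).const_mul (γ * β⁻¹)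
    rw [integral_add e2 e4, integral_sub e1 e3, integral_sub (i1 i) (i2 i),
      integral_const_mul, integral_const_mul, hL1 i, hL2 i, hL3 i]
    have hKi : (∫ x : Phase ν, w x * (A.mulVec x.2 i * fderiv ℝ f x (vp i))) = K i := rfl
    have hb : γ * β⁻¹ * (β * K i) = γ * K i := by
      field_simp
    rw [hKi, hb]
    ring
  -- the key unnormalized identity
  have key : ∫ x, w x * (A.mulVec x.2 ⬝ᵥ gradQ f x - grad U x.1 ⬝ᵥ gradP f x
      - γ * (A.mulVec x.2 ⬝ᵥ gradP f x) + γ * β⁻¹ * lapP f x) = 0 := by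
    have hfun : (fun x => w x * (A.mulVec x.2 ⬝ᵥ gradQ f x - grad U x.1 ⬝ᵥ gradP f x
        - γ * (A.mulVec x.2 ⬝ᵥ gradP f x) + γ * β⁻¹ * lapP f x))
        = fun x => ∑ i, (w x * (A.mulVec x.2 i * fderiv ℝ f x (vq i))
          - w x * (grad U x.1 i * fderiv ℝ f x (vp i))
          - γ * (w x * (A.mulVec x.2 i * fderiv ℝ f x (vp i)))
          + γ * β⁻¹ * (w x * fderiv ℝ (fun y => fderiv ℝ f y (vp i)) x (vp i))) := by
      funext x
      simp only [gradQ, gradP, lapP, dotProduct, hvq, hvp, Finset.mul_sum, mul_sub,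
        mul_add, ← Finset.sum_sub_distrib, ← Finset.sum_add_distrib]
      refine Finset.sum_congr rfl fun i _ => by ring
    have eint : ∀ i ∈ (Finset.univ : Finset (Fin ν)),
        Integrable (fun x : Phase ν => w x * (A.mulVec x.2 i * fderiv ℝ f x (vq i))
          - w x * (grad U x.1 i * fderiv ℝ f x (vp i))
          - γ * (w x * (A.mulVec x.2 i * fderiv ℝ f x (vp i)))
          + γ * β⁻¹ * (w x * fderiv ℝ (fun y => fderiv ℝ f y (vp i)) x (vp i))) volume :=
      fun i _ =>
        ((((i1 i).sub (i2 i)).sub ((i3 i).const_mul γ)).add ((i4 i).const_mul (γ * β⁻¹)))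
    rw [hfun, integral_finset_sum _ eint]
    exact Finset.sum_eq_zero fun i _ => hzero i
  -- from the Gibbs measure to the weighted Lebesgue integral
  set Z : ℝ := ∫ y, w y with hZ
  have hZnn : 0 ≤ Z⁻¹ := by
    rw [hZ]
    exact inv_nonneg.2 (integral_nonneg fun y => (Real.exp_pos _).le)
  have hmeas : Measurable fun x : Phase ν => Real.toNNReal (Z⁻¹ * w x) :=
    (continuous_real_toNNReal.comp (continuous_const.mul hwc)).measurable
  have hgibbs : gibbs β (hamiltonian M U)
      = volume.withDensity fun x => ((Real.toNNReal (Z⁻¹ * w x) : ℝ≥0) : ℝ≥0∞) := rfl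
  rw [hgibbs, integral_withDensity_eq_integral_smul hmeas]
  have hptw : ∀ x : Phase ν, Real.toNNReal (Z⁻¹ * w x)
      • (A.mulVec x.2 ⬝ᵥ gradQ f x - grad U x.1 ⬝ᵥ gradP f x
        - γ * (A.mulVec x.2 ⬝ᵥ gradP f x) + γ * β⁻¹ * lapP f x)
      = Z⁻¹ * (w x * (A.mulVec x.2 ⬝ᵥ gradQ f x - grad U x.1 ⬝ᵥ gradP f x
        - γ * (A.mulVec x.2 ⬝ᵥ gradP f x) + γ * β⁻¹ * lapP f x)) := by
    intro x
    rw [NNReal.smul_def, Real.coe_toNNReal _ (mul_nonneg hZnn (Real.exp_pos _).le), smul_eq_mul]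
    ring
  simp only [hptw]
  rw [integral_const_mul, key, mul_zero]
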